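/- Let I₁ and I₂ be independent inverse-gamma random variables with shapes a₁, a₂ > 0 and common scale parameter such that the product scale is γ̄. Then the product I = I₁·I₂ has PDF f(y) = (2 γ̄^{(a₁+a₂)/2} / (Γ(a₁)Γ(a₂))) · y^{-(a₁+a₂)/2 − 1} · K_{a₂−a₁}(2 (γ̄/y)^{1/2}) for y > 0, where K_ν is the modified Bessel function of the second kind. -/

import Mathlib

/-!
Conditioning on `I₁ = x`, the product `I₁ I₂` has density
`u ↦ ∫ f₁(x) f₂(u / x) dx / |x|`. For inverse-gamma factors and `u > 0` the substitution
`x = √(s₁ u / s₂) eᵗ` turns `exp (-s₁ / x - s₂ x / u)` into `exp (-2 √(γ̄ / u) cosh t)` and the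
power of `x` into `exp ((a₂ - a₁) t)`; the `t`-integral of `exp (ν t - z cosh t)` over `ℝ` is
`2 K_ν(z)`, since averaging `t` and `-t` replaces `exp (ν t)` by `cosh (ν t)`.
-/

open MeasureTheory ProbabilityTheory Real Set

/-- The inverse-gamma PDF with shape `a` and scale `s`. -/
noncomputable def igPdf (a s : ℝ) (y : ℝ) : ℝ :=
  if 0 < y then s ^ a / (Real.Gamma a * y ^ (a + 1)) * Real.exp (-s / y) else 0

/-- The modified Bessel function of the second kind, via its integral representation
`K_ν(z) = ∫₀^∞ exp(−z cosh t) cosh(ν t) dt` (valid for z > 0). -/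
noncomputable def besselK (ν z : ℝ) : ℝ :=
  ∫ t in Set.Ioi (0 : ℝ), Real.exp (-z * Real.cosh t) * Real.cosh (ν * t)

open scoped ENNReal

noncomputable def digPdf (a₁ a₂ γ y : ℝ) : ℝ :=
  if 0 < y then
    2 * γ ^ ((a₁ + a₂) / 2) / (Gamma a₁ * Gamma a₂) * y ^ (-(a₁ + a₂) / 2 - 1) *
      besselK (a₂ - a₁) (2 * (γ / y) ^ ((1 : ℝ) / 2))
  else 0

lemma igPdf_nonneg {a s : ℝ} (ha : 0 < a) (hs : 0 ≤ s) (y : ℝ) : 0 ≤ igPdf a s y := by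
  unfold igPdf
  split_ifs
  · have := Gamma_pos_of_pos ha
    positivity
  · rfl

lemma igPdf_of_nonpos {a s y : ℝ} (hy : y ≤ 0) : igPdf a s y = 0 := if_neg hy.not_gt

lemma measurable_igPdf (a s : ℝ) : Measurable (igPdf a s) :=
  Measurable.ite measurableSet_Ioi (by fun_prop) measurable_const

noncomputable def mulConvDensity (f g : ℝ → ℝ≥0∞) (u : ℝ) : ℝ≥0∞ :=
  ∫⁻ x, f x * (ENNReal.ofReal |x|⁻¹ * g (u / x))

lemma measurable_mulConvDensity {f g : ℝ → ℝ≥0∞} (hf : Measurable f) (hg : Measurable g) :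
    Measurable (mulConvDensity f g) :=
  Measurable.lintegral_prod_right (by fun_prop)

lemma Real.lintegral_comp_mul_left {x : ℝ} (hx : x ≠ 0) {F : ℝ → ℝ≥0∞} (hF : Measurable F) :
    ∫⁻ y, F (x * y) = ENNReal.ofReal |x|⁻¹ * ∫⁻ u, F u := by
  rw [← lintegral_map hF (measurable_const_mul x), Real.map_volume_mul_left hx,
    lintegral_smul_measure, smul_eq_mul, abs_inv]

/-- The substitution `y = u / x` is made on every fibre `x ≠ 0`; the fibre `x = 0` is null. -/
theorem mconv_withDensity_eq_withDensity_mulConvDensity {f g : ℝ → ℝ≥0∞} (hf : Measurable f)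
    (hg : Measurable g) :
    volume.withDensity f ∗ₘ volume.withDensity g = volume.withDensity (mulConvDensity f g) := by
  refine Measure.ext_of_lintegral _ fun φ hφ => ?_
  have hfibre : ∀ᵐ x, f x * ∫⁻ y, φ (x * y) ∂volume.withDensity g
      = ∫⁻ u, f x * (ENNReal.ofReal |x|⁻¹ * g (u / x)) * φ u := by
    filter_upwards [Measure.ae_ne volume 0] with x hx
    rw [lintegral_withDensity_eq_lintegral_mul _ hg (by fun_prop)]
    have hcomp : (g * fun y => φ (x * y)) = fun y => (fun u => g (u / x) * φ u) (x * y) := by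
      funext y
      simp only [Pi.mul_apply, mul_div_cancel_left₀ _ hx]
    rw [hcomp, Real.lintegral_comp_mul_left hx (by fun_prop),
      ← lintegral_const_mul _ (by fun_prop), ← lintegral_const_mul _ (by fun_prop)]
    simp only [mul_assoc]
  rw [Measure.lintegral_mconv hφ, lintegral_withDensity_eq_lintegral_mul _ hf (by fun_prop),
    lintegral_withDensity_eq_lintegral_mul _ (measurable_mulConvDensity hf hg) hφ]
  simp only [Pi.mul_apply]
  rw [lintegral_congr_ae hfibre, lintegral_lintegral_swap (by fun_prop)]
  refine lintegral_congr fun u => ?_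
  rw [mulConvDensity, lintegral_mul_const _ (by fun_prop)]

lemma integrable_exp_mul_sub_mul_sq (a : ℝ) {b : ℝ} (hb : 0 < b) :
    Integrable fun t : ℝ => exp (a * t - b * t ^ 2) := by
  simpa [Complex.norm_exp, sub_eq_neg_add, neg_mul, sq] using
    (integrable_cexp_quadratic (b := b) (by simpa using hb) a 0).norm

lemma sq_div_four_le_cosh (t : ℝ) : t ^ 2 / 4 ≤ cosh t := by
  have hexp : exp |t| ≤ 2 * cosh t := by
    rw [← cosh_abs, cosh_eq]
    linarith [exp_pos (-|t|)]
  nlinarith [quadratic_le_exp_of_nonneg (abs_nonneg t), sq_abs t, abs_nonneg t]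

lemma integrable_exp_mul_mul_exp_neg_mul_cosh (ν : ℝ) {z : ℝ} (hz : 0 < z) :
    Integrable fun t => exp (ν * t) * exp (-z * cosh t) := by
  refine (integrable_exp_mul_sub_mul_sq ν (by positivity : 0 < z / 4)).mono' (by fun_prop) ?_
  refine Filter.Eventually.of_forall fun t => ?_
  rw [norm_of_nonneg (by positivity), ← exp_add, exp_le_exp]
  nlinarith [sq_div_four_le_cosh t]

lemma integral_exp_mul_mul_exp_neg_mul_cosh (ν : ℝ) {z : ℝ} (hz : 0 < z) :
    ∫ t, exp (ν * t) * exp (-z * cosh t) = 2 * besselK ν z := by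
  set g := fun t => exp (ν * t) * exp (-z * cosh t)
  have hg : Integrable g := integrable_exp_mul_mul_exp_neg_mul_cosh ν hz
  have hneg : ∫ t, g (-t) = ∫ t, g t := integral_neg_eq_self g volume
  have heven : ∫ t, g t = ∫ t, exp (-z * cosh |t|) * cosh (ν * |t|) := calc
    ∫ t, g t = ∫ t, (g t + g (-t)) / 2 := by
      rw [integral_div, integral_add hg hg.comp_neg, hneg]
      ring
    _ = ∫ t, exp (-z * cosh |t|) * cosh (ν * |t|) := by
      congr 1 with t
      have hcosh : cosh (ν * |t|) = cosh (ν * t) := by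
        rcases abs_choice t with h | h <;> simp [h]
      simp only [g, cosh_abs, hcosh, cosh_neg, mul_neg, cosh_eq (ν * t)]
      ring
  rw [heven, integral_comp_abs (f := fun t => exp (-z * cosh t) * cosh (ν * t)), besselK]

lemma lintegral_exp_mul_mul_exp_neg_mul_cosh (ν : ℝ) {z : ℝ} (hz : 0 < z) :
    ∫⁻ t, ENNReal.ofReal (exp (ν * t) * exp (-z * cosh t)) = ENNReal.ofReal (2 * besselK ν z) := by
  rw [← integral_exp_mul_mul_exp_neg_mul_cosh ν hz, ofReal_integral_eq_lintegral_ofReal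
    (integrable_exp_mul_mul_exp_neg_mul_cosh ν hz)
    (Filter.Eventually.of_forall fun t => by positivity)]

lemma lintegral_Ioi_eq_lintegral_mul_exp {c : ℝ} (hc : 0 < c) (g : ℝ → ℝ≥0∞) :
    ∫⁻ x in Ioi 0, g x = ∫⁻ t, ENNReal.ofReal (c * exp t) * g (c * exp t) := by
  have himage : (fun t => c * exp t) '' univ = Ioi 0 := by
    rw [image_univ, show (fun t => c * exp t) = (c * ·) ∘ exp from rfl, range_comp, range_exp,
      image_const_mul_Ioi_zero hc]
  rw [← himage, lintegral_image_eq_lintegral_abs_deriv_mul MeasurableSet.univ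
    (fun t _ => ((hasDerivAt_exp t).const_mul c).hasDerivWithinAt)
    (fun t _ s _ h => exp_injective (mul_left_cancel₀ hc.ne' h)), Measure.restrict_univ]
  simp only [abs_of_pos (mul_pos hc (exp_pos _))]

lemma ofReal_mul_mul_ofReal_abs_inv_mul {x : ℝ} (hx : 0 < x) (a b : ℝ≥0∞) :
    ENNReal.ofReal x * (a * (ENNReal.ofReal |x|⁻¹ * b)) = a * b := by
  have hcancel : ENNReal.ofReal x * ENNReal.ofReal |x|⁻¹ = 1 := by
    rw [abs_of_pos hx, ← ENNReal.ofReal_mul hx.le, mul_inv_cancel₀ hx.ne', ENNReal.ofReal_one]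
  calc ENNReal.ofReal x * (a * (ENNReal.ofReal |x|⁻¹ * b))
      = a * (ENNReal.ofReal x * ENNReal.ofReal |x|⁻¹) * b := by ring
    _ = a * b := by rw [hcancel, mul_one]

section
variable {a₁ a₂ s₁ s₂ : ℝ}

lemma igPdf_mul_igPdf_div {x u : ℝ} (hx : 0 < x) (hu : 0 < u) :
    igPdf a₁ s₁ x * igPdf a₂ s₂ (u / x) = s₁ ^ a₁ * s₂ ^ a₂ / (Gamma a₁ * Gamma a₂) *
      u ^ (-(a₂ + 1)) * x ^ (a₂ - a₁) * exp (-(s₁ / x + s₂ * x / u)) := by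
  rw [igPdf, if_pos hx, igPdf, if_pos (div_pos hu hx), div_rpow hu.le hx.le, rpow_neg hu.le,
    rpow_sub hx, neg_add, exp_add, rpow_add_one hx.ne', rpow_add_one hx.ne', div_div_eq_mul_div,
    neg_mul, neg_div, neg_div]
  field_simp

/-- With `q ^ 2 = s₁ s₂ / u`, the point `x = (s₁ / q) eᵗ` makes `s₁ / x = q e⁻ᵗ` and
`s₂ x / u = q eᵗ`. -/
lemma igPdf_mul_igPdf_div_mul_exp {u q : ℝ} (hs₁ : 0 < s₁) (hs₂ : 0 < s₂) (hu : 0 < u)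
    (hq : 0 < q) (hq2 : q ^ 2 = s₁ * s₂ / u) (t : ℝ) :
    igPdf a₁ s₁ (s₁ / q * exp t) * igPdf a₂ s₂ (u / (s₁ / q * exp t)) =
      (s₁ * s₂) ^ ((a₁ + a₂) / 2) / (Gamma a₁ * Gamma a₂) * u ^ (-(a₁ + a₂) / 2 - 1) *
        (exp ((a₂ - a₁) * t) * exp (-(2 * q) * cosh t)) := by
  have hsq : s₁ * s₂ = q ^ 2 * u := by rw [hq2]; field_simp
  have hexp : -(s₁ / (s₁ / q * exp t) + s₂ * (s₁ / q * exp t) / u) = -(2 * q) * cosh t := by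
    rw [cosh_eq, exp_neg]
    field_simp
    linear_combination -(exp t ^ 2) * hsq
  have hpow : (s₁ / q * exp t) ^ (a₂ - a₁) = (s₁ / q) ^ (a₂ - a₁) * exp ((a₂ - a₁) * t) := by
    rw [mul_rpow (by positivity) (exp_pos t).le, ← exp_mul, mul_comm t]
  have hconst : s₁ ^ a₁ * s₂ ^ a₂ * u ^ (-(a₂ + 1)) * (s₁ / q) ^ (a₂ - a₁) =
      (s₁ * s₂) ^ ((a₁ + a₂) / 2) * u ^ (-(a₁ + a₂) / 2 - 1) := by
    have hlog := congrArg log hq2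
    rw [log_pow, log_div (by positivity) hu.ne', log_mul hs₁.ne' hs₂.ne'] at hlog
    push_cast at hlog
    rw [← exp_log (by positivity : 0 < s₁ ^ a₁ * s₂ ^ a₂ * u ^ (-(a₂ + 1)) * (s₁ / q) ^ (a₂ - a₁)),
      ← exp_log (by positivity : 0 < (s₁ * s₂) ^ ((a₁ + a₂) / 2) * u ^ (-(a₁ + a₂) / 2 - 1))]
    congr 1
    simp (disch := positivity) only [log_mul, log_rpow, log_div]
    linear_combination (a₁ - a₂) / 2 * hlog
  rw [igPdf_mul_igPdf_div (by positivity) hu, hexp, hpow]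
  linear_combination exp ((a₂ - a₁) * t) * exp (-(2 * q) * cosh t) / (Gamma a₁ * Gamma a₂) * hconst

lemma mulConvDensity_igPdf_of_nonpos {u : ℝ} (hu : u ≤ 0) :
    mulConvDensity (fun y => ENNReal.ofReal (igPdf a₁ s₁ y))
      (fun y => ENNReal.ofReal (igPdf a₂ s₂ y)) u = 0 := by
  refine (lintegral_congr fun x => ?_).trans lintegral_zero
  rcases le_or_gt x 0 with hx | hx
  · simp [igPdf_of_nonpos hx]
  · simp [igPdf_of_nonpos (div_nonpos_of_nonpos_of_nonneg hu hx.le)]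

lemma mulConvDensity_igPdf_of_pos (ha₁ : 0 < a₁) (ha₂ : 0 < a₂) (hs₁ : 0 < s₁) (hs₂ : 0 < s₂)
    {u : ℝ} (hu : 0 < u) :
    mulConvDensity (fun y => ENNReal.ofReal (igPdf a₁ s₁ y))
      (fun y => ENNReal.ofReal (igPdf a₂ s₂ y)) u = ENNReal.ofReal (digPdf a₁ a₂ (s₁ * s₂) u) := by
  set q := sqrt (s₁ * s₂ / u)
  have hq : 0 < q := sqrt_pos.2 (by positivity)
  have hq2 : q ^ 2 = s₁ * s₂ / u := sq_sqrt (by positivity)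
  have hΓ₁ := Gamma_pos_of_pos ha₁
  have hΓ₂ := Gamma_pos_of_pos ha₂
  have hsupp : (Function.support fun x => ENNReal.ofReal (igPdf a₁ s₁ x) *
      (ENNReal.ofReal |x|⁻¹ * ENNReal.ofReal (igPdf a₂ s₂ (u / x)))) ⊆ Ioi 0 := by
    intro x hx
    by_contra hx0
    exact hx (by simp [igPdf_of_nonpos (not_lt.1 hx0)])
  have hintegrand : ∀ t, ENNReal.ofReal (s₁ / q * exp t) *
      (ENNReal.ofReal (igPdf a₁ s₁ (s₁ / q * exp t)) * (ENNReal.ofReal |s₁ / q * exp t|⁻¹ *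
        ENNReal.ofReal (igPdf a₂ s₂ (u / (s₁ / q * exp t))))) =
      ENNReal.ofReal ((s₁ * s₂) ^ ((a₁ + a₂) / 2) / (Gamma a₁ * Gamma a₂) *
        u ^ (-(a₁ + a₂) / 2 - 1)) *
      ENNReal.ofReal (exp ((a₂ - a₁) * t) * exp (-(2 * q) * cosh t)) := by
    intro t
    rw [ofReal_mul_mul_ofReal_abs_inv_mul (by positivity),
      ← ENNReal.ofReal_mul (igPdf_nonneg ha₁ hs₁.le _),
      igPdf_mul_igPdf_div_mul_exp hs₁ hs₂ hu hq hq2, ENNReal.ofReal_mul (by positivity)]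
  rw [mulConvDensity, ← setLIntegral_eq_of_support_subset hsupp,
    lintegral_Ioi_eq_lintegral_mul_exp (div_pos hs₁ hq), lintegral_congr hintegrand,
    lintegral_const_mul' _ _ ENNReal.ofReal_ne_top,
    lintegral_exp_mul_mul_exp_neg_mul_cosh _ (by positivity), ← ENNReal.ofReal_mul (by positivity),
    digPdf, if_pos hu, ← sqrt_eq_rpow]
  congr 1
  ring

theorem mulConvDensity_igPdf (ha₁ : 0 < a₁) (ha₂ : 0 < a₂) (hs₁ : 0 < s₁) (hs₂ : 0 < s₂) :
    mulConvDensity (fun y => ENNReal.ofReal (igPdf a₁ s₁ y))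
      (fun y => ENNReal.ofReal (igPdf a₂ s₂ y)) =
      fun y => ENNReal.ofReal (digPdf a₁ a₂ (s₁ * s₂) y) := by
  ext u
  rcases le_or_gt u 0 with hu | hu
  · rw [mulConvDensity_igPdf_of_nonpos hu, digPdf, if_neg hu.not_gt, ENNReal.ofReal_zero]
  · exact mulConvDensity_igPdf_of_pos ha₁ ha₂ hs₁ hs₂ hu

end

theorem double_inverse_gamma_pdf_general {Ω : Type*} [MeasurableSpace Ω] (P : Measure Ω)
    [IsProbabilityMeasure P] (I₁ I₂ : Ω → ℝ) (a₁ a₂ s₁ s₂ γbar : ℝ)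
    (ha₁ : 0 < a₁) (ha₂ : 0 < a₂) (hs₁ : 0 < s₁) (hs₂ : 0 < s₂) (hγ : γbar = s₁ * s₂)
    [MeasureTheory.HasPDF I₁ P] [MeasureTheory.HasPDF I₂ P]
    (h₁ : MeasureTheory.pdf I₁ P =ᵐ[volume] fun y => ENNReal.ofReal (igPdf a₁ s₁ y))
    (h₂ : MeasureTheory.pdf I₂ P =ᵐ[volume] fun y => ENNReal.ofReal (igPdf a₂ s₂ y))
    (hind : IndepFun I₁ I₂ P) :
    MeasureTheory.pdf (fun ω => I₁ ω * I₂ ω) P =ᵐ[volume] fun y =>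
      ENNReal.ofReal (if 0 < y then
        2 * γbar ^ ((a₁ + a₂) / 2) / (Real.Gamma a₁ * Real.Gamma a₂) *
          y ^ (-(a₁ + a₂) / 2 - 1) *
          besselK (a₂ - a₁) (2 * (γbar / y) ^ ((1 : ℝ) / 2))
      else 0) := by
  subst hγ
  have hX₁ := HasPDF.aemeasurable I₁ P volume
  have hX₂ := HasPDF.aemeasurable I₂ P volume
  have hf₁ := (measurable_igPdf a₁ s₁).ennreal_ofReal
  have hf₂ := (measurable_igPdf a₂ s₂).ennreal_ofReal
  have hmeas : Measurable fun y => ENNReal.ofReal (digPdf a₁ a₂ (s₁ * s₂) y) :=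
    mulConvDensity_igPdf ha₁ ha₂ hs₁ hs₂ ▸ measurable_mulConvDensity hf₁ hf₂
  have hmap : P.map (I₁ * I₂) =
      volume.withDensity fun y => ENNReal.ofReal (digPdf a₁ a₂ (s₁ * s₂) y) := by
    rw [hind.map_mul_eq_map_mconv_map₀ hX₁ hX₂, map_eq_withDensity_pdf I₁ P,
      map_eq_withDensity_pdf I₂ P, withDensity_congr_ae h₁, withDensity_congr_ae h₂,
      mconv_withDensity_eq_withDensity_mulConvDensity hf₁ hf₂,
      mulConvDensity_igPdf ha₁ ha₂ hs₁ hs₂]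
  have : HasPDF (I₁ * I₂) P := hasPDF_of_map_eq_withDensity (hX₁.mul hX₂) _ hmeas.aemeasurable hmap
  exact (pdf.eq_of_map_eq_withDensity _ hmeas.aemeasurable).mp hmap

/-- The product of two independent inverse-gamma random variables with shapes a₁, a₂ > 0 and
scale product γ̄ has the double-inverse-gamma PDF
`f(y) = 2 γ̄^{(a₁+a₂)/2}/(Γ(a₁)Γ(a₂)) · y^{-(a₁+a₂)/2-1} · K_{a₂−a₁}(2 (γ̄/y)^{1/2})` for y > 0. -/
theorem double_inverse_gamma_pdf {Ω : Type*} [MeasurableSpace Ω] (P : Measure Ω)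
    [IsProbabilityMeasure P] (I₁ I₂ : Ω → ℝ) (a₁ a₂ s₁ s₂ γbar : ℝ)
    (ha₁ : 0 < a₁) (ha₂ : 0 < a₂) (hs₁ : 0 < s₁) (hs₂ : 0 < s₂) (hγ : γbar = s₁ * s₂)
    (hm₁ : Measurable I₁) (hm₂ : Measurable I₂)
    [MeasureTheory.HasPDF I₁ P] [MeasureTheory.HasPDF I₂ P]
    (h₁ : MeasureTheory.pdf I₁ P =ᵐ[volume] fun y => ENNReal.ofReal (igPdf a₁ s₁ y))
    (h₂ : MeasureTheory.pdf I₂ P =ᵐ[volume] fun y => ENNReal.ofReal (igPdf a₂ s₂ y))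
    (hind : IndepFun I₁ I₂ P) :
    MeasureTheory.pdf (fun ω => I₁ ω * I₂ ω) P =ᵐ[volume] fun y =>
      ENNReal.ofReal (if 0 < y then
        2 * γbar ^ ((a₁ + a₂) / 2) / (Real.Gamma a₁ * Real.Gamma a₂) *
          y ^ (-(a₁ + a₂) / 2 - 1) *
          besselK (a₂ - a₁) (2 * (γbar / y) ^ ((1 : ℝ) / 2))
      else 0) :=
  double_inverse_gamma_pdf_general P I₁ I₂ a₁ a₂ s₁ s₂ γbar ha₁ ha₂ hs₁ hs₂ hγ h₁ h₂ hind
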